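/- For p₀ ∈ (0,1) and γ ∈ (0,1), the normal distortion function w_{p₀,γ} is concave on (0, p*] and convex on [p*, 1), where p* = Φ(γΦ⁻¹(p₀)/(1+γ)). -/

import Mathlib

open Real MeasureTheory ProbabilityTheory Set Filter

/-- Standard normal CDF. -/
noncomputable def Phi (x : ℝ) : ℝ :=
  ∫ t in Set.Iic x, Real.exp (-t ^ 2 / 2) / Real.sqrt (2 * Real.pi)

/-- Standard normal quantile function (inverse of `Phi`). -/
noncomputable def PhiInv : ℝ → ℝ := Function.invFun Phi

/-- Standard normal density. -/
noncomputable def ndens (x : ℝ) : ℝ :=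
  Real.exp (-x ^ 2 / 2) / Real.sqrt (2 * Real.pi)

/-- Normal distortion function. -/
noncomputable def wdist (p₀ γ p : ℝ) : ℝ :=
  Phi (γ * PhiInv p + (1 - γ) * PhiInv p₀)

/-! With `x = Φ⁻¹(p)` and `x₀ = Φ⁻¹(p₀)`, the inverse function rule gives
`w'(p) = γ φ(γx + (1-γ)x₀) / φ(x) = γ exp ((x² - (γx + (1-γ)x₀)²) / 2)`.
The exponent is a quadratic in `x` with leading coefficient `1 - γ² > 0` and vertex
`x* = γx₀ / (1 + γ)`, and `Φ⁻¹` is increasing, so `w'` decreases on `(0, Φ(x*))` and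
increases on `(Φ(x*), 1)`. -/

lemma ndens_pos (x : ℝ) : 0 < ndens x := by
  unfold ndens
  positivity

lemma ndens_eq_gaussianPDFReal : ndens = gaussianPDFReal 0 1 := by
  ext x
  simp [ndens, gaussianPDFReal, div_eq_inv_mul]

lemma continuous_ndens : Continuous ndens := by
  unfold ndens
  fun_prop

lemma integrable_ndens : Integrable ndens :=
  ndens_eq_gaussianPDFReal ▸ integrable_gaussianPDFReal 0 1

lemma Phi_eq_cdf_gaussianReal : Phi = cdf (gaussianReal 0 1) := by
  ext x
  have hPhi : Phi x = ∫ t in Iic x, gaussianPDFReal 0 1 t := by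
    rw [← ndens_eq_gaussianPDFReal]; rfl
  rw [cdf_eq_real, measureReal_def, gaussianReal_apply_eq_integral _ one_ne_zero, ← hPhi,
    ENNReal.toReal_ofReal (hPhi ▸ setIntegral_nonneg measurableSet_Iic
      fun t _ => gaussianPDFReal_nonneg 0 1 t)]

lemma hasDerivAt_Phi (x : ℝ) : HasDerivAt Phi (ndens x) x := by
  have hPhi : Phi = fun y => Phi 0 + ∫ t in (0:ℝ)..y, ndens t := by
    ext y
    rw [← intervalIntegral.integral_Iic_sub_Iic integrable_ndens.integrableOn
      integrable_ndens.integrableOn]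
    exact (add_sub_cancel _ _).symm
  rw [hPhi]
  exact (intervalIntegral.integral_hasDerivAt_right integrable_ndens.intervalIntegrable
    (continuous_ndens.stronglyMeasurableAtFilter _ _) continuous_ndens.continuousAt).const_add _

lemma strictMono_Phi : StrictMono Phi :=
  strictMono_of_hasDerivAt_pos hasDerivAt_Phi ndens_pos

lemma continuous_Phi : Continuous Phi :=
  continuous_iff_continuousAt.2 fun x => (hasDerivAt_Phi x).continuousAt

lemma Phi_mem_Ioo (x : ℝ) : Phi x ∈ Ioo (0:ℝ) 1 := by
  have h₀ : 0 ≤ Phi (x - 1) := by rw [Phi_eq_cdf_gaussianReal]; exact cdf_nonneg _ _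
  have h₁ : Phi (x + 1) ≤ 1 := by rw [Phi_eq_cdf_gaussianReal]; exact cdf_le_one _ _
  exact ⟨h₀.trans_lt (strictMono_Phi (sub_one_lt x)), (strictMono_Phi (lt_add_one x)).trans_le h₁⟩

lemma Phi_PhiInv {p : ℝ} (hp : p ∈ Ioo (0:ℝ) 1) : Phi (PhiInv p) = p := by
  have hlim := Phi_eq_cdf_gaussianReal ▸ tendsto_cdf_atBot (gaussianReal 0 1)
  have hlim' := Phi_eq_cdf_gaussianReal ▸ tendsto_cdf_atTop (gaussianReal 0 1)
  exact Function.invFun_eq <| mem_range_of_exists_le_of_exists_ge continuous_Phi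
    (hlim.eventually (eventually_le_nhds hp.1)).exists
    (hlim'.eventually (eventually_ge_nhds hp.2)).exists

lemma PhiInv_Phi (x : ℝ) : PhiInv (Phi x) = x :=
  Function.leftInverse_invFun strictMono_Phi.injective x

lemma PhiInv_lt_iff {p : ℝ} (hp : p ∈ Ioo (0:ℝ) 1) {x : ℝ} : PhiInv p < x ↔ p < Phi x := by
  rw [← strictMono_Phi.lt_iff_lt, Phi_PhiInv hp]

lemma lt_PhiInv_iff {p : ℝ} (hp : p ∈ Ioo (0:ℝ) 1) {x : ℝ} : x < PhiInv p ↔ Phi x < p := by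
  rw [← strictMono_Phi.lt_iff_lt, Phi_PhiInv hp]

lemma strictMonoOn_PhiInv : StrictMonoOn PhiInv (Ioo (0:ℝ) 1) := fun _ hp _ hq hpq =>
  (PhiInv_lt_iff hp).2 <| by rwa [Phi_PhiInv hq]

lemma hasDerivAt_PhiInv {p : ℝ} (hp : p ∈ Ioo (0:ℝ) 1) :
    HasDerivAt PhiInv (ndens (PhiInv p))⁻¹ p := by
  have hcont : ContinuousAt PhiInv p :=
    strictMonoOn_PhiInv.continuousAt_of_image_mem_nhds (isOpen_Ioo.mem_nhds hp) <|
      Filter.univ_mem' fun x => ⟨Phi x, Phi_mem_Ioo x, PhiInv_Phi x⟩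
  exact (hasDerivAt_Phi _).of_local_left_inverse hcont (ndens_pos _).ne'
    (isOpen_Ioo.eventually_mem hp |>.mono fun _ => Phi_PhiInv)

lemma ndens_div_ndens (x y : ℝ) : ndens y / ndens x = exp ((x ^ 2 - y ^ 2) / 2) := by
  rw [ndens, ndens, div_div_div_cancel_right₀ (by positivity), ← exp_sub]
  ring_nf

lemma hasDerivAt_wdist (p₀ γ : ℝ) {p : ℝ} (hp : p ∈ Ioo (0:ℝ) 1) :
    HasDerivAt (wdist p₀ γ)
      (γ * exp ((PhiInv p ^ 2 - (γ * PhiInv p + (1 - γ) * PhiInv p₀) ^ 2) / 2)) p := by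
  have h := (hasDerivAt_Phi _).comp p (((hasDerivAt_PhiInv hp).const_mul γ).add_const
    ((1 - γ) * PhiInv p₀))
  rw [← ndens_div_ndens]
  exact h.congr_deriv (by ring)

section Exponent

variable {γ x₀ : ℝ}

lemma antitoneOn_sq_sub_sq_affine (hγ : γ ∈ Ioc (-1) 1) :
    AntitoneOn (fun x => x ^ 2 - (γ * x + (1 - γ) * x₀) ^ 2) (Iic (γ * x₀ / (1 + γ))) := by
  intro a ha b hb hab
  rw [mem_Iic, le_div_iff₀ (by linarith [hγ.1])] at ha hb
  have : 0 ≤ (b - a) * (1 - γ) * (2 * γ * x₀ - (1 + γ) * (a + b)) :=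
    mul_nonneg (mul_nonneg (by linarith) (by linarith [hγ.2])) (by linarith)
  nlinarith

lemma monotoneOn_sq_sub_sq_affine (hγ : γ ∈ Ioc (-1) 1) :
    MonotoneOn (fun x => x ^ 2 - (γ * x + (1 - γ) * x₀) ^ 2) (Ici (γ * x₀ / (1 + γ))) := by
  intro a ha b hb hab
  rw [mem_Ici, div_le_iff₀ (by linarith [hγ.1])] at ha hb
  have : 0 ≤ (b - a) * (1 - γ) * ((1 + γ) * (a + b) - 2 * γ * x₀) :=
    mul_nonneg (mul_nonneg (by linarith) (by linarith [hγ.2])) (by linarith)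
  nlinarith

end Exponent

section Derivative

variable {p₀ γ : ℝ}

lemma differentiableOn_wdist : DifferentiableOn ℝ (wdist p₀ γ) (Ioo 0 1) := fun _ hp =>
  (hasDerivAt_wdist p₀ γ hp).differentiableAt.differentiableWithinAt

lemma antitoneOn_deriv_wdist (hγ : γ ∈ Ioo 0 1) :
    AntitoneOn (deriv (wdist p₀ γ)) (Ioo 0 (Phi (γ * PhiInv p₀ / (1 + γ)))) := by
  intro a ha b hb hab
  have ha' : a ∈ Ioo (0:ℝ) 1 := ⟨ha.1, ha.2.trans (Phi_mem_Ioo _).2⟩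
  have hb' : b ∈ Ioo (0:ℝ) 1 := ⟨hb.1, hb.2.trans (Phi_mem_Ioo _).2⟩
  rw [(hasDerivAt_wdist p₀ γ ha').deriv, (hasDerivAt_wdist p₀ γ hb').deriv]
  gcongr γ * exp (?_ / 2)
  · exact hγ.1.le
  exact antitoneOn_sq_sub_sq_affine ⟨by linarith [hγ.1], hγ.2.le⟩
    ((PhiInv_lt_iff ha').2 ha.2).le ((PhiInv_lt_iff hb').2 hb.2).le
    (strictMonoOn_PhiInv.monotoneOn ha' hb' hab)

lemma monotoneOn_deriv_wdist (hγ : γ ∈ Ioo 0 1) :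
    MonotoneOn (deriv (wdist p₀ γ)) (Ioo (Phi (γ * PhiInv p₀ / (1 + γ))) 1) := by
  intro a ha b hb hab
  have ha' : a ∈ Ioo (0:ℝ) 1 := ⟨(Phi_mem_Ioo _).1.trans ha.1, ha.2⟩
  have hb' : b ∈ Ioo (0:ℝ) 1 := ⟨(Phi_mem_Ioo _).1.trans hb.1, hb.2⟩
  rw [(hasDerivAt_wdist p₀ γ ha').deriv, (hasDerivAt_wdist p₀ γ hb').deriv]
  gcongr γ * exp (?_ / 2)
  · exact hγ.1.le
  exact monotoneOn_sq_sub_sq_affine ⟨by linarith [hγ.1], hγ.2.le⟩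
    ((lt_PhiInv_iff ha').2 ha.1).le ((lt_PhiInv_iff hb').2 hb.1).le
    (strictMonoOn_PhiInv.monotoneOn ha' hb' hab)

end Derivative

theorem stmt4_general (p₀ γ : ℝ) (hγ : γ ∈ Set.Ioo (0:ℝ) 1) :
    ConcaveOn ℝ (Set.Ioc 0 (Phi (γ * PhiInv p₀ / (1 + γ)))) (wdist p₀ γ) ∧
    ConvexOn ℝ (Set.Ico (Phi (γ * PhiInv p₀ / (1 + γ))) 1) (wdist p₀ γ) := by
  obtain ⟨hpos, hlt⟩ := Phi_mem_Ioo (γ * PhiInv p₀ / (1 + γ))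
  constructor
  · refine AntitoneOn.concaveOn_of_deriv (convex_Ioc _ _)
      (differentiableOn_wdist.continuousOn.mono (Ioc_subset_Ioo_right hlt)) ?_ ?_ <;>
      rw [interior_Ioc]
    · exact differentiableOn_wdist.mono (Ioo_subset_Ioo_right hlt.le)
    · exact antitoneOn_deriv_wdist hγ
  · refine MonotoneOn.convexOn_of_deriv (convex_Ico _ _)
      (differentiableOn_wdist.continuousOn.mono (Ico_subset_Ioo_left hpos)) ?_ ?_ <;>
      rw [interior_Ico]
    · exact differentiableOn_wdist.mono (Ioo_subset_Ioo_left hpos.le)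
    · exact monotoneOn_deriv_wdist hγ

theorem stmt4 (p₀ γ : ℝ) (hp₀ : p₀ ∈ Set.Ioo (0:ℝ) 1) (hγ : γ ∈ Set.Ioo (0:ℝ) 1) :
    ConcaveOn ℝ (Set.Ioc 0 (Phi (γ * PhiInv p₀ / (1 + γ)))) (wdist p₀ γ) ∧
    ConvexOn ℝ (Set.Ico (Phi (γ * PhiInv p₀ / (1 + γ))) 1) (wdist p₀ γ) :=
  stmt4_general p₀ γ hγ
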